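/- Let X = βℕ \ ℕ and let (Pₙ) be a sequence of closed nowhere dense p-sets in X. Then P = cl(⋃ₙ Pₙ) is again a closed nowhere dense p-set in X. -/
import Mathlib

/-- The remainder `βℕ \ ℕ`, realized as the subspace of free ultrafilters in `Ultrafilter ℕ`. -/
abbrev OmegaStar : Type := {x : Ultrafilter ℕ // x ∉ Set.range (pure : ℕ → Ultrafilter ℕ)}

/-- `A` is a p-set: for every sequence `(Gₙ)` of open sets each containing `A`,
`A ⊆ int (⋂ₙ Gₙ)`. -/
def IsPSet {X : Type*} [TopologicalSpace X] (A : Set X) : Prop :=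
  ∀ G : ℕ → Set X, (∀ n, IsOpen (G n) ∧ A ⊆ G n) → A ⊆ interior (⋂ n, G n)

open Set Filter Topology

namespace OmegaStarAux

/-- The basic clopen set determined by `s ⊆ ℕ`. -/
def bstar (s : Set ℕ) : Set OmegaStar := {x | s ∈ x.1}

lemma isOpen_bstar (s : Set ℕ) : IsOpen (bstar s) :=
  (ultrafilter_isOpen_basic s).preimage continuous_subtype_val

lemma isClosed_bstar (s : Set ℕ) : IsClosed (bstar s) :=
  (ultrafilter_isClosed_basic s).preimage continuous_subtype_val

lemma infinite_of_mem {x : OmegaStar} {s : Set ℕ} (hs : s ∈ x.1) : s.Infinite := by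
  by_contra hfin
  rw [Set.not_infinite] at hfin
  obtain ⟨a, _, ha⟩ := Ultrafilter.eq_pure_of_finite_mem hfin hs
  exact x.2 ⟨a, ha.symm⟩

lemma exists_mem_of_infinite {s : Set ℕ} (hs : s.Infinite) : ∃ x : OmegaStar, s ∈ x.1 := by
  have hne : (cofinite ⊓ 𝓟 s).NeBot := hs.cofinite_inf_principal_neBot
  have hle : (Ultrafilter.of (cofinite ⊓ 𝓟 s) : Filter ℕ) ≤ cofinite ⊓ 𝓟 s :=
    Ultrafilter.of_le _
  refine ⟨⟨Ultrafilter.of (cofinite ⊓ 𝓟 s), ?_⟩, ?_⟩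
  · rintro ⟨a, ha⟩
    have h1 : ({a}ᶜ : Set ℕ) ∈ Ultrafilter.of (cofinite ⊓ 𝓟 s) :=
      (hle.trans inf_le_left) ((finite_singleton a).compl_mem_cofinite)
    rw [← ha] at h1
    exact (mem_pure.mp h1) rfl
  · exact (hle.trans inf_le_right) (mem_principal_self s)

lemma bstar_nonempty {s : Set ℕ} (hs : s.Infinite) : (bstar s).Nonempty := by
  obtain ⟨x, hx⟩ := exists_mem_of_infinite hs
  exact ⟨x, hx⟩

lemma bstar_mono {s t : Set ℕ} (h : (s \ t).Finite) : bstar s ⊆ bstar t := by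
  intro x hx
  have h1 : (s \ t) ∉ x.1 := fun hm => (infinite_of_mem hm) h
  have h2 : (s \ t)ᶜ ∈ x.1 := Ultrafilter.compl_mem_iff_notMem.mpr h1
  have h3 : s ∩ (s \ t)ᶜ ∈ x.1 := inter_mem hx h2
  refine mem_of_superset h3 ?_
  rintro a ⟨ha1, ha2⟩
  by_contra hat
  exact ha2 ⟨ha1, hat⟩

lemma bstar_subset {s t : Set ℕ} (h : s ⊆ t) : bstar s ⊆ bstar t :=
  bstar_mono (by simp [Set.diff_eq_empty.mpr h])

lemma exists_bstar_mem_subset {U : Set OmegaStar} (hU : IsOpen U) {x : OmegaStar}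
    (hx : x ∈ U) : ∃ s ∈ x.1, x ∈ bstar s ∧ bstar s ⊆ U := by
  obtain ⟨V, hV, rfl⟩ := isOpen_induced_iff.mp hU
  obtain ⟨t, ht, hxt, htV⟩ := ultrafilterBasis_is_basis.exists_subset_of_mem_open hx hV
  obtain ⟨s, rfl⟩ := ht
  exact ⟨s, hxt, hxt, fun y hy => htV hy⟩

lemma isOpen_range_pure : IsOpen (Set.range (pure : ℕ → Ultrafilter ℕ)) := by
  have : Set.range (pure : ℕ → Ultrafilter ℕ) = ⋃ a : ℕ, {u : Ultrafilter ℕ | {a} ∈ u} := by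
    ext u
    constructor
    · rintro ⟨a, rfl⟩
      exact Set.mem_iUnion.mpr ⟨a, rfl⟩
    · intro hu
      obtain ⟨a, ha⟩ := Set.mem_iUnion.mp hu
      obtain ⟨b, hb, hub⟩ := Ultrafilter.eq_pure_of_finite_mem (finite_singleton a) ha
      exact ⟨b, hub.symm⟩
  rw [this]
  exact isOpen_iUnion fun a => ultrafilter_isOpen_basic _
instance : CompactSpace OmegaStar := by
  have hcl : IsClosed {x : Ultrafilter ℕ | x ∉ Set.range (pure : ℕ → Ultrafilter ℕ)} := by
    rw [show {x : Ultrafilter ℕ | x ∉ Set.range (pure : ℕ → Ultrafilter ℕ)}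
        = (Set.range (pure : ℕ → Ultrafilter ℕ))ᶜ from rfl, isClosed_compl_iff]
    exact isOpen_range_pure
  exact isCompact_iff_compactSpace.mp hcl.isCompact

/-- A closed set inside an open set can be separated by a basic clopen set. -/
lemma exists_bstar_between {K U : Set OmegaStar} (hK : IsClosed K) (hU : IsOpen U)
    (hKU : K ⊆ U) : ∃ A : Set ℕ, K ⊆ bstar A ∧ bstar A ⊆ U := by
  have hcomp : IsCompact K := hK.isCompact
  have hch : ∀ x : K, ∃ s : Set ℕ, s ∈ (x : OmegaStar).1 ∧ bstar s ⊆ U := by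
    intro x
    obtain ⟨s, hs, _, hsub⟩ := exists_bstar_mem_subset hU (hKU x.2)
    exact ⟨s, hs, hsub⟩
  choose f hf1 hf2 using hch
  obtain ⟨t, ht⟩ := hcomp.elim_finite_subcover (fun i : K => bstar (f i))
    (fun i => isOpen_bstar _) (fun x hx => Set.mem_iUnion.mpr ⟨⟨x, hx⟩, hf1 ⟨x, hx⟩⟩)
  refine ⟨⋃ i ∈ (t : Set K), f i, ?_, ?_⟩
  · intro x hx
    obtain ⟨i, hi, hxi⟩ := Set.mem_iUnion₂.mp (ht hx)
    exact mem_of_superset hxi (Set.subset_biUnion_of_mem hi)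
  · intro x hx
    have : ∃ i ∈ (t : Set K), f i ∈ x.1 :=
      (Ultrafilter.finite_biUnion_mem_iff (t : Set K).toFinite).mp hx
    obtain ⟨i, _, hi⟩ := this
    exact hf2 i hi

lemma mem_of_mem_closure_iUnion {x : OmegaStar} {A : ℕ → Set ℕ}
    (hx : x ∈ closure (⋃ m, bstar (A m))) : (⋃ m, A m) ∈ x.1 := by
  by_contra hA
  have hc : (⋃ m, A m)ᶜ ∈ x.1 := Ultrafilter.compl_mem_iff_notMem.mpr hA
  obtain ⟨y, hy1, hy2⟩ := mem_closure_iff.mp hx (bstar ((⋃ m, A m)ᶜ)) (isOpen_bstar _) hc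
  obtain ⟨m, hm⟩ := Set.mem_iUnion.mp hy2
  have : (⋃ m, A m)ᶜ ∩ A m ∈ y.1 := inter_mem hy1 hm
  have hemp : (⋃ m, A m)ᶜ ∩ A m = ∅ :=
    Set.eq_empty_iff_forall_notMem.mpr fun a ⟨h1, h2⟩ => h1 (Set.mem_iUnion.mpr ⟨m, h2⟩)
  rw [hemp] at this
  exact Ultrafilter.empty_notMem this

/-- Diagonalisation: a pseudo-intersection of a decreasing sequence of infinite sets. -/
lemma exists_pseudo_inter (t : ℕ → Set ℕ) (hinf : ∀ n, (t n).Infinite)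
    (hdec : ∀ n, t (n + 1) ⊆ t n) :
    ∃ s : Set ℕ, s.Infinite ∧ ∀ n, (s \ t n).Finite := by
  have hanti : ∀ {m n : ℕ}, n ≤ m → t m ⊆ t n := by
    intro m n hnm
    induction hnm with
    | refl => exact le_refl _
    | step h ih => exact (hdec _).trans ih
  have hstep : ∀ n m : ℕ, ∃ b ∈ t n, m < b := fun n m => (hinf n).exists_gt m
  let g : ℕ → ℕ := fun n => Nat.rec ((hstep 0 0).choose)
    (fun n prev => (hstep (n + 1) prev).choose) n
  have hg_mem : ∀ n, g n ∈ t n := by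
    intro n
    cases n with
    | zero => exact (hstep 0 0).choose_spec.1
    | succ n => exact (hstep (n + 1) (g n)).choose_spec.1
  have hg_lt : ∀ n, g n < g (n + 1) := fun n => (hstep (n + 1) (g n)).choose_spec.2
  have hg_mono : StrictMono g := strictMono_nat_of_lt_succ hg_lt
  refine ⟨Set.range g, Set.infinite_range_of_injective hg_mono.injective, ?_⟩
  intro n
  have hsub : Set.range g \ t n ⊆ g '' (Set.Iio n) := by
    rintro a ⟨⟨m, rfl⟩, ham⟩
    by_cases hmn : m < n
    · exact ⟨m, hmn, rfl⟩
    · exact absurd (hanti (not_lt.mp hmn) (hg_mem m)) ham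
  exact ((Set.finite_Iio n).image g).subset hsub

/-- Core lemma: nowhere density of the closure of the union. -/
lemma interior_closure_eq_empty (P : ℕ → Set OmegaStar) (hcl : ∀ n, IsClosed (P n))
    (hnd : ∀ n, IsNowhereDense (P n)) : interior (closure (⋃ n, P n)) = ∅ := by
  by_contra hne
  obtain ⟨x, hx⟩ := Set.nonempty_iff_ne_empty.mpr hne
  obtain ⟨b, hbx, _, hb⟩ := exists_bstar_mem_subset isOpen_interior hx
  have hbinf : b.Infinite := infinite_of_mem hbx
  -- a step of the recursion
  have step : ∀ (u : Set ℕ) (n : ℕ), u.Infinite →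
      ∃ v : Set ℕ, v ⊆ u ∧ v.Infinite ∧ bstar v ∩ P n = ∅ := by
    intro u n hu
    have hopen : IsOpen (bstar u \ P n) := (isOpen_bstar u).sdiff (hcl n)
    have hne' : (bstar u \ P n).Nonempty := by
      by_contra hemp
      have hsub : bstar u ⊆ P n := by
        intro y hy
        by_contra hyn
        exact hemp ⟨y, hy, hyn⟩
      have h1 : bstar u ⊆ interior (closure (P n)) :=
        interior_maximal (hsub.trans subset_closure) (isOpen_bstar u)
      rw [hnd n] at h1
      obtain ⟨y, hy⟩ := bstar_nonempty hu
      exact h1 hy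
    obtain ⟨y, hy⟩ := hne'
    obtain ⟨r, hry, hyr, hr⟩ := exists_bstar_mem_subset hopen hy
    refine ⟨r ∩ u, Set.inter_subset_right, ?_, ?_⟩
    · exact infinite_of_mem (inter_mem hry hy.1)
    · have : bstar (r ∩ u) ⊆ bstar r := bstar_subset Set.inter_subset_left
      ext z
      simp only [Set.mem_inter_iff, Set.mem_empty_iff_false, iff_false, not_and]
      intro hz hzp
      exact (hr (this hz)).2 hzp
  choose f hf1 hf2 hf3 using step
  -- recursive sequence of infinite sets
  let T : ℕ → {u : Set ℕ // u.Infinite} := fun n =>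
    Nat.rec ⟨f b 0 hbinf, hf2 b 0 hbinf⟩
      (fun n prev => ⟨f prev.1 (n + 1) prev.2, hf2 prev.1 (n + 1) prev.2⟩) n
  have hT0 : (T 0).1 ⊆ b := hf1 b 0 hbinf
  have hTdec : ∀ n, (T (n + 1)).1 ⊆ (T n).1 := fun n => hf1 (T n).1 (n + 1) (T n).2
  have hTdisj : ∀ n, bstar (T n).1 ∩ P n = ∅ := by
    intro n
    cases n with
    | zero => exact hf3 b 0 hbinf
    | succ n => exact hf3 (T n).1 (n + 1) (T n).2
  obtain ⟨s, hsinf, hs⟩ := exists_pseudo_inter (fun n => (T n).1) (fun n => (T n).2) hTdec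
  have hsb : (s \ b).Finite :=
    (hs 0).subset fun a ⟨h1, h2⟩ => ⟨h1, fun hh => h2 (hT0 hh)⟩
  have hcl' : bstar s ⊆ closure (⋃ n, P n) :=
    (bstar_mono hsb).trans (hb.trans interior_subset)
  obtain ⟨z, hz⟩ := bstar_nonempty hsinf
  obtain ⟨y, hy1, hy2⟩ := mem_closure_iff.mp (hcl' hz) (bstar s) (isOpen_bstar s) hz
  obtain ⟨n, hn⟩ := Set.mem_iUnion.mp hy2
  have : y ∈ bstar (T n).1 ∩ P n := ⟨bstar_mono (hs n) hy1, hn⟩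
  rw [hTdisj n] at this
  exact this

end OmegaStarAux

open OmegaStarAux

theorem stmt9 (P : ℕ → Set OmegaStar)
    (h : ∀ n, IsClosed (P n) ∧ IsNowhereDense (P n) ∧ IsPSet (P n)) :
    IsClosed (closure (⋃ n, P n)) ∧ IsNowhereDense (closure (⋃ n, P n)) ∧
      IsPSet (closure (⋃ n, P n)) := by
  set Q := closure (⋃ n, P n) with hQ
  have hPQ : ∀ m, P m ⊆ Q := fun m => (Set.subset_iUnion P m).trans subset_closure
  refine ⟨isClosed_closure, ?_, ?_⟩
  · show interior (closure Q) = ∅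
    rw [hQ, closure_closure]
    exact interior_closure_eq_empty P (fun n => (h n).1) (fun n => (h n).2.1)
  · intro G hG x hx
    by_contra hxW
    -- the closed complements
    set K : ℕ → Set OmegaStar := fun n => (G n)ᶜ with hK
    have hKQ : ∀ n, K n ⊆ Qᶜ := fun n => Set.compl_subset_compl.mpr (hG n).2
    -- choose clopen neighborhoods of the K n avoiding Q
    have hBex : ∀ n, ∃ B : Set ℕ, K n ⊆ bstar B ∧ bstar B ⊆ Qᶜ := fun n =>
      exists_bstar_between (isClosed_compl_iff.mpr (hG n).1) isClosed_closure.isOpen_compl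
        (hKQ n)
    choose B hB1 hB2 using hBex
    -- each P m is a p-set, so it sits inside the interior of ⋂ (bstar (B n))ᶜ
    have hPW : ∀ m, P m ⊆ interior (⋂ n, (bstar (B n))ᶜ) := by
      intro m
      refine (h m).2.2 (fun n => (bstar (B n))ᶜ) (fun n => ⟨(isClosed_bstar (B n)).isOpen_compl, ?_⟩)
      intro y hy
      exact fun hyB => (hB2 n hyB) (hPQ m hy)
    -- choose clopen neighborhoods of the P m inside that interior
    have hAex : ∀ m, ∃ A : Set ℕ, P m ⊆ bstar A ∧ bstar A ⊆ interior (⋂ n, (bstar (B n))ᶜ) :=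
      fun m => exists_bstar_between (h m).1 isOpen_interior (hPW m)
    choose A hA1 hA2 using hAex
    -- all pairs of stars are disjoint, so A m ∩ B n is finite
    have hABfin : ∀ m n, (A m ∩ B n).Finite := by
      intro m n
      rw [← Set.not_infinite]
      intro hinf
      obtain ⟨y, hy⟩ := exists_mem_of_infinite hinf
      have hyA : y ∈ bstar (A m) := mem_of_superset hy Set.inter_subset_left
      have hyB : y ∈ bstar (B n) := mem_of_superset hy Set.inter_subset_right
      exact (Set.mem_iInter.mp (interior_subset (hA2 m hyA)) n) hyB
    -- disjointify
    set E : ℕ → Set ℕ := fun m => A m \ ⋃ k ∈ Finset.range (m + 1), B k with hE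
    set F : ℕ → Set ℕ := fun n => B n \ ⋃ k ∈ Finset.range (n + 1), A k with hF
    have hAE : ∀ m, bstar (A m) ⊆ bstar (E m) := by
      intro m
      refine bstar_mono ?_
      have : A m \ E m ⊆ ⋃ k ∈ Finset.range (m + 1), A m ∩ B k := by
        rintro a ⟨ha1, ha2⟩
        simp only [hE, Set.mem_diff, not_and, not_not] at ha2
        obtain ⟨k, hk1, hk2⟩ := Set.mem_iUnion₂.mp (ha2 ha1)
        exact Set.mem_iUnion₂.mpr ⟨k, hk1, ha1, hk2⟩
      exact (((Finset.range (m + 1)).finite_toSet.biUnion fun k _ => hABfin m k).subset this)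
    have hBF : ∀ n, bstar (B n) ⊆ bstar (F n) := by
      intro n
      refine bstar_mono ?_
      have : B n \ F n ⊆ ⋃ k ∈ Finset.range (n + 1), A k ∩ B n := by
        rintro a ⟨ha1, ha2⟩
        simp only [hF, Set.mem_diff, not_and, not_not] at ha2
        obtain ⟨k, hk1, hk2⟩ := Set.mem_iUnion₂.mp (ha2 ha1)
        exact Set.mem_iUnion₂.mpr ⟨k, hk1, hk2, ha1⟩
      exact (((Finset.range (n + 1)).finite_toSet.biUnion fun k _ => hABfin k n).subset this)
    -- x is in the closure of both unions of stars
    have hxE : (⋃ m, E m) ∈ x.1 := by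
      refine mem_of_mem_closure_iUnion (closure_mono ?_ hx)
      intro y hy
      obtain ⟨m, hm⟩ := Set.mem_iUnion.mp hy
      exact Set.mem_iUnion.mpr ⟨m, hAE m (hA1 m hm)⟩
    have hxF : (⋃ n, F n) ∈ x.1 := by
      have hx2 : x ∈ closure ((⋂ n, G n)ᶜ) := by
        rw [closure_compl]
        exact hxW
      refine mem_of_mem_closure_iUnion (closure_mono ?_ hx2)
      rw [Set.compl_iInter]
      intro y hy
      obtain ⟨n, hn⟩ := Set.mem_iUnion.mp hy
      exact Set.mem_iUnion.mpr ⟨n, hBF n (hB1 n hn)⟩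
    -- but the unions are disjoint
    have hdisj : (⋃ m, E m) ∩ (⋃ n, F n) = ∅ := by
      ext a
      simp only [Set.mem_inter_iff, Set.mem_iUnion, Set.mem_empty_iff_false, iff_false, not_and]
      rintro ⟨m, ham⟩ ⟨n, han⟩
      rcases le_or_gt n m with hnm | hmn
      · exact ham.2 (Set.mem_iUnion₂.mpr ⟨n, Finset.mem_range.mpr (Nat.lt_succ_of_le hnm), han.1⟩)
      · exact han.2 (Set.mem_iUnion₂.mpr ⟨m, Finset.mem_range.mpr (hmn.trans (Nat.lt_succ_self n)), ham.1⟩)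
    have := inter_mem hxE hxF
    rw [hdisj] at this
    exact Ultrafilter.empty_notMem this
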